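/- If A, B ⊆ 𝔽₂ⁿ are nonempty finite sets with D(A,B) ≥ ε > 0, then there exist subsets A' ⊆ A and B' ⊆ B with |A'| ≥ (ε/4)|A| and |B'| ≥ (ε²/4)·(|A|/|span(A)|)·|B| such that D(A',B') = 1. -/

import Mathlib

open Finset

noncomputable def chi (x : ZMod 2) : ℝ := if x = 0 then 1 else -1

def ip {n : ℕ} (a b : Fin n → ZMod 2) : ZMod 2 := ∑ i, a i * b i

noncomputable def Dm {n : ℕ} (A B : Finset (Fin n → ZMod 2)) : ℝ :=
  |∑ a ∈ A, ∑ b ∈ B, chi (ip a b)| / ((A.card : ℝ) * B.card)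

/-!
Restricting `a ↦ ⟨a, b⟩` to `G = span A` turns every `b` into a functional `φ_b ∈ G^*`, and the
correlation of `A` and `B` becomes `∑_{b ∈ B} T(φ_b)` with `T(ψ) = ∑_{a ∈ A} (-1)^{ψ a}`.
Parseval over `G^*` gives `∑_ψ T(ψ)² = |A||G|`, so Cauchy–Schwarz along the fibres of `b ↦ φ_b`
produces a fibre `B'` with `D(A,B)²|A||B| ≤ |B'||G|`. Every `⟨a, ·⟩` is constant on `B'`, and the
more frequent of its two values on `A` picks out `A'` with `|A'| ≥ |A|/2`.
-/

theorem chi_add (x y : ZMod 2) : chi (x + y) = chi x * chi y := by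
  have hcases : ∀ z : ZMod 2, z = 0 ∨ z = 1 := by decide
  rcases hcases x with rfl | rfl <;> rcases hcases y with rfl | rfl <;>
    simp [chi, show (1 + 1 : ZMod 2) = 0 from rfl]

theorem abs_chi (x : ZMod 2) : |chi x| = 1 := by
  unfold chi; split_ifs <;> simp

theorem exists_sq_sum_abs_comp_le_card_fiber_mul {β γ : Type*} [Fintype γ] [Nonempty γ]
    [DecidableEq γ] (B : Finset β) (f : β → γ) (w : γ → ℝ) :
    ∃ c, (∑ b ∈ B, |w (f b)|) ^ 2 ≤ #{b ∈ B | f b = c} * #B * ∑ d, w d ^ 2 := by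
  obtain ⟨c, -, hc⟩ := exists_max_image univ (fun c ↦ #{b ∈ B | f b = c}) univ_nonempty
  refine ⟨c, ?_⟩
  have hfibers : ∑ b ∈ B, |w (f b)| = ∑ d, (#{b ∈ B | f b = d} : ℝ) * |w d| := by
    rw [← sum_fiberwise' B f (fun d ↦ |w d|)]
    simp only [sum_const, nsmul_eq_mul]
  have hcard : ∑ d, (#{b ∈ B | f b = d} : ℝ) = #B := by
    exact_mod_cast (card_eq_sum_card_fiberwise fun b _ ↦ mem_univ (f b)).symm
  calc (∑ b ∈ B, |w (f b)|) ^ 2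
      ≤ (∑ d, (#{b ∈ B | f b = d} : ℝ) ^ 2) * ∑ d, |w d| ^ 2 := by
        rw [hfibers]; exact sum_mul_sq_le_sq_mul_sq _ _ _
    _ ≤ (∑ d, (#{b ∈ B | f b = c} : ℝ) * #{b ∈ B | f b = d}) * ∑ d, w d ^ 2 := by
        simp only [sq_abs]
        gcongr ?_ * _
        refine sum_le_sum fun d hd ↦ ?_
        rw [sq]
        exact mul_le_mul_of_nonneg_right (mod_cast hc d hd) (Nat.cast_nonneg _)
    _ = #{b ∈ B | f b = c} * #B * ∑ d, w d ^ 2 := by rw [← mul_sum, hcard]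

theorem Module.card_dual_eq_card {K V : Type*} [Field K] [AddCommGroup V] [Module K V]
    [Module.Finite K V] [Fintype V] [Fintype (Module.Dual K V)] :
    Fintype.card (Module.Dual K V) = Fintype.card V :=
  (Fintype.card_congr (Module.finBasis K V).toDualEquiv.toEquiv).symm

section Fourier

variable {V : Type*} [AddCommGroup V] [Module (ZMod 2) V]

theorem sum_dual_chi [DecidableEq V] [Fintype (Module.Dual (ZMod 2) V)] (v : V) :
    ∑ φ : Module.Dual (ZMod 2) V, chi (φ v) =
      if v = 0 then (Fintype.card (Module.Dual (ZMod 2) V) : ℝ) else 0 := by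
  split_ifs with hv
  · simp [hv, chi]
  obtain ⟨φ₀, hφ₀⟩ := Module.Projective.exists_dual_eq_one (ZMod 2) hv
  -- translating by `φ₀` flips the sign of every term, since `φ₀ v = 1`
  have hflip := Fintype.sum_equiv (Equiv.addRight φ₀) (fun φ ↦ chi ((φ + φ₀) v))
    (fun φ ↦ chi (φ v)) fun _ ↦ rfl
  simp only [LinearMap.add_apply, hφ₀, chi_add, show chi 1 = -1 from rfl, mul_neg_one,
    sum_neg_distrib] at hflip
  linarith

theorem sum_dual_sq_sum_chi [Fintype V] [Fintype (Module.Dual (ZMod 2) V)] (S : Finset V) :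
    ∑ φ : Module.Dual (ZMod 2) V, (∑ s ∈ S, chi (φ s)) ^ 2 = #S * Fintype.card V := by
  classical
  calc ∑ φ : Module.Dual (ZMod 2) V, (∑ s ∈ S, chi (φ s)) ^ 2
      = ∑ s ∈ S, ∑ t ∈ S, ∑ φ : Module.Dual (ZMod 2) V, chi (φ (s + t)) := by
        simp only [sq, sum_mul_sum, map_add, chi_add]
        rw [sum_comm]; exact sum_congr rfl fun _ _ ↦ sum_comm
    _ = ∑ s ∈ S, ∑ t ∈ S, if s = t then (Fintype.card V : ℝ) else 0 := by
        simp only [sum_dual_chi, ← ZModModule.sub_eq_add, sub_eq_zero, Module.card_dual_eq_card]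
    _ = #S * Fintype.card V := by simp

end Fourier

section InnerProduct

variable {n : ℕ}

theorem abs_sum_sum_chi_ip_le (A B : Finset (Fin n → ZMod 2)) :
    |∑ a ∈ A, ∑ b ∈ B, chi (ip a b)| ≤ #A * #B := by
  calc |∑ a ∈ A, ∑ b ∈ B, chi (ip a b)| ≤ ∑ a ∈ A, ∑ b ∈ B, |chi (ip a b)| :=
        (abs_sum_le_sum_abs _ _).trans (sum_le_sum fun _ _ ↦ abs_sum_le_sum_abs _ _)
    _ = #A * #B := by simp [abs_chi]

theorem Dm_le_one (A B : Finset (Fin n → ZMod 2)) : Dm A B ≤ 1 :=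
  div_le_one_of_le₀ (abs_sum_sum_chi_ip_le A B) (by positivity)

theorem nonempty_of_Dm_pos {A B : Finset (Fin n → ZMod 2)} (h : 0 < Dm A B) :
    A.Nonempty ∧ B.Nonempty := by
  constructor <;>
  · by_contra hE
    simp [Dm, not_nonempty_iff_eq_empty.mp hE] at h

theorem Dm_eq_one_of_forall_ip_eq {A B : Finset (Fin n → ZMod 2)} (hA : A.Nonempty)
    (hB : B.Nonempty) {v : ZMod 2} (h : ∀ a ∈ A, ∀ b ∈ B, ip a b = v) : Dm A B = 1 := by
  have hsum : ∑ a ∈ A, ∑ b ∈ B, chi (ip a b) = #A * #B * chi v := by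
    rw [sum_congr rfl fun a ha ↦ sum_congr rfl fun b hb ↦ congrArg chi (h a ha b hb)]
    simp [mul_assoc]
  have hpos : (0 : ℝ) < #A * #B := by
    have := hA.card_pos; have := hB.card_pos; positivity
  rw [Dm, hsum, abs_mul, abs_chi, mul_one, abs_of_pos hpos, div_self hpos.ne']

theorem Dm_sq_mul_card_mul_card (A B : Finset (Fin n → ZMod 2)) :
    Dm A B ^ 2 * #A * #B = (∑ a ∈ A, ∑ b ∈ B, chi (ip a b)) ^ 2 / (#A * #B) := by
  rcases eq_or_ne ((#A : ℝ) * #B) 0 with h0 | h0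
  · rw [mul_assoc, h0, mul_zero, div_zero]
  · rw [Dm, div_pow, sq_abs]
    field_simp

theorem exists_subset_forall_ip_eq (A B : Finset (Fin n → ZMod 2)) :
    ∃ B' ⊆ B, Dm A B ^ 2 * #A * #B ≤
        #B' * Nat.card (Submodule.span (ZMod 2) (A : Set (Fin n → ZMod 2))) ∧
      ∀ a ∈ A, ∀ b ∈ B', ∀ b' ∈ B', ip a b = ip a b' := by
  classical
  set G := Submodule.span (ZMod 2) (A : Set (Fin n → ZMod 2))
  have : Fintype G := Fintype.ofFinite G
  have : Finite (Module.Dual (ZMod 2) G) := Module.finite_of_finite (ZMod 2)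
  have : Fintype (Module.Dual (ZMod 2) G) := Fintype.ofFinite _
  let φ : (Fin n → ZMod 2) → Module.Dual (ZMod 2) G := fun b ↦
    ((dotProductBilin (ZMod 2) (ZMod 2)).flip b).domRestrict G
  let S : Finset G := A.subtype (· ∈ G)
  let T : Module.Dual (ZMod 2) G → ℝ := fun ψ ↦ ∑ a ∈ S, chi (ψ a)
  obtain ⟨c, hc⟩ := exists_sq_sum_abs_comp_le_card_fiber_mul B φ T
  refine ⟨{b ∈ B | φ b = c}, filter_subset _ _, ?_, ?_⟩
  · have hT : ∑ a ∈ A, ∑ b ∈ B, chi (ip a b) = ∑ b ∈ B, T (φ b) := by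
      rw [sum_comm]
      exact sum_congr rfl fun b _ ↦
        (sum_subtype_of_mem (fun a ↦ chi (ip a b)) fun _ ha ↦ Submodule.subset_span ha).symm
    have hS : #S = #A := by
      rw [card_subtype, filter_true_of_mem]
      exact fun _ ha ↦ Submodule.subset_span ha
    have hsq : (∑ a ∈ A, ∑ b ∈ B, chi (ip a b)) ^ 2 ≤
        #{b ∈ B | φ b = c} * Nat.card G * (#A * #B) := by
      calc (∑ a ∈ A, ∑ b ∈ B, chi (ip a b)) ^ 2 ≤ (∑ b ∈ B, |T (φ b)|) ^ 2 := by
            rw [hT, ← sq_abs]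
            exact pow_le_pow_left₀ (abs_nonneg _) (abs_sum_le_sum_abs _ _) 2
        _ ≤ _ := hc
        _ = _ := by rw [sum_dual_sq_sum_chi, hS, Nat.card_eq_fintype_card]; ring
    rw [Dm_sq_mul_card_mul_card]
    exact div_le_of_le_mul₀ (by positivity) (by positivity) hsq
  · intro a ha b hb b' hb'
    have hφ : φ b = φ b' := (mem_filter.mp hb).2.trans (mem_filter.mp hb').2.symm
    exact LinearMap.congr_fun hφ ⟨a, Submodule.subset_span ha⟩

theorem exists_subset_card_ge_half_Dm_eq_one {A B : Finset (Fin n → ZMod 2)} (hA : A.Nonempty)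
    (hB : B.Nonempty) (h : ∀ a ∈ A, ∀ b ∈ B, ∀ b' ∈ B, ip a b = ip a b') :
    ∃ A' ⊆ A, (#A : ℝ) / 2 ≤ #A' ∧ Dm A' B = 1 := by
  obtain ⟨b₀, hb₀⟩ := hB
  obtain ⟨v, -, hv⟩ := exists_le_card_fiber_of_nsmul_le_card_of_maps_to
    (s := A) (f := fun a ↦ ip a b₀) (b := (#A : ℝ) / 2) (fun _ _ ↦ mem_univ _) univ_nonempty
    (by simp [ZMod.card, mul_div_cancel₀])
  have hA' : ({a ∈ A | ip a b₀ = v} : Finset _).Nonempty := by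
    rw [← card_pos, ← Nat.cast_pos (α := ℝ)]
    have := hA.card_pos
    exact lt_of_lt_of_le (by positivity) hv
  refine ⟨_, filter_subset _ _, hv, Dm_eq_one_of_forall_ip_eq hA' ⟨b₀, hb₀⟩ (v := v) ?_⟩
  intro a ha b hb
  rw [mem_filter] at ha
  rw [h a ha.1 b hb b₀ hb₀, ha.2]

end InnerProduct

theorem stmt_4_general {n : ℕ} (A B : Finset (Fin n → ZMod 2))
    (ε : ℝ) (hε : 0 < ε) (h : ε ≤ Dm A B) :
    ∃ A' ⊆ A, ∃ B' ⊆ B,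
      (ε / 4) * A.card ≤ (A'.card : ℝ) ∧
      (ε ^ 2 / 4) * ((A.card : ℝ) /
          (Nat.card (Submodule.span (ZMod 2) (A : Set (Fin n → ZMod 2))) : ℝ)) * B.card
        ≤ (B'.card : ℝ) ∧
      Dm A' B' = 1 := by
  obtain ⟨hA, hB⟩ := nonempty_of_Dm_pos (hε.trans_le h)
  obtain ⟨B', hB'B, hB'card, hconst⟩ := exists_subset_forall_ip_eq A B
  set K := (Nat.card (Submodule.span (ZMod 2) (A : Set (Fin n → ZMod 2))) : ℝ)
  have hK : 0 < K := Nat.cast_pos.mpr Nat.card_pos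
  have hB'large : ε ^ 2 * #A * #B ≤ #B' * K := le_trans (by gcongr) hB'card
  have hB'ne : B'.Nonempty := by
    rw [← card_pos, ← Nat.cast_pos (α := ℝ)]
    have := hA.card_pos; have := hB.card_pos
    exact pos_of_mul_pos_left (lt_of_lt_of_le (by positivity) hB'large) hK.le
  obtain ⟨A', hA'A, hA'card, hDm⟩ := exists_subset_card_ge_half_Dm_eq_one hA hB'ne hconst
  refine ⟨A', hA'A, B', hB'B, ?_, ?_, hDm⟩
  · nlinarith [Dm_le_one A B, hA.card_pos]
  · calc ε ^ 2 / 4 * (#A / K) * #B ≤ ε ^ 2 * (#A / K) * #B := by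
          gcongr
          exact div_le_self (sq_nonneg ε) (by norm_num)
      _ = ε ^ 2 * #A * #B / K := by ring
      _ ≤ #B' := (div_le_iff₀ hK).mpr hB'large

/-- Approximate duality for sets with small span (Ben-Sasson–Zewi). -/
theorem stmt_4 {n : ℕ} (A B : Finset (Fin n → ZMod 2)) (hA : A.Nonempty) (hB : B.Nonempty)
    (ε : ℝ) (hε : 0 < ε) (h : ε ≤ Dm A B) :
    ∃ A' ⊆ A, ∃ B' ⊆ B,
      (ε / 4) * A.card ≤ (A'.card : ℝ) ∧
      (ε ^ 2 / 4) * ((A.card : ℝ) /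
          (Nat.card (Submodule.span (ZMod 2) (A : Set (Fin n → ZMod 2))) : ℝ)) * B.card
        ≤ (B'.card : ℝ) ∧
      Dm A' B' = 1 :=
  stmt_4_general A B ε hε h
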